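/- arXiv:2106.02565 — 5 statements merged into one kernel-verified Lean document; each statement's English description precedes it below -/
import Mathlib

section
/- Let k be a field of characteristic 0, let g ∈ k[t,t⁻¹] be nonzero, and let a ∈ k[t,t⁻¹]. If Res₀(g²·(a·b' − a'·b)) = 0 for all b ∈ k[t,t⁻¹], then g·a is a constant in k. -/
/-- Formal derivative on Laurent polynomials, sending `tⁿ` to `n·tⁿ⁻¹`. -/
noncomputable def lderiv {k : Type*} [CommRing k] (f : LaurentPolynomial k) : LaurentPolynomial k :=
  AddMonoidAlgebra.ofCoeff (Finsupp.sum f.coeff fun n a => Finsupp.single (n - 1) ((n : k) * a))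

/-- `Res₀(f)`: the coefficient of `t⁻¹` in a Laurent polynomial. -/
noncomputable def lres {k : Type*} [CommRing k] (f : LaurentPolynomial k) : k := f.coeff (-1)

/-!
Since `(g²ab)' = (ga)'·gb + ga·(gb)'`, one has `2·(ga)'g·b = (g²ab)' − g²(ab' − a'b)`, and
residues of derivatives vanish. The hypothesis therefore says that `Res₀((ga)'g·b) = 0` for
every `b`; taking `b = t⁻¹⁻ᵐ` reads off every coefficient of `(ga)'g`, so `(ga)'g = 0`, hence
`(ga)' = 0` as `g ≠ 0`, and in characteristic zero `ga` is constant.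
-/

open LaurentPolynomial AddMonoidAlgebra

section CommRing

variable {k : Type*} [CommRing k]

theorem coeff_lderiv (f : LaurentPolynomial k) (m : ℤ) :
    (lderiv f).coeff m = ((m + 1 : ℤ) : k) * f.coeff (m + 1) := by
  classical
  rw [lderiv, coeff_ofCoeff, Finsupp.sum_apply, Finsupp.sum, Finset.sum_eq_single (m + 1)]
  · rw [add_sub_cancel_right, Finsupp.single_eq_same]
  · intro n _ hne
    rw [Finsupp.single_apply, if_neg (by omega)]
  · intro hm
    rw [Finsupp.notMem_support_iff.mp hm, mul_zero, Finsupp.single_zero, Finsupp.zero_apply]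

@[simp]
theorem lderiv_zero : lderiv (0 : LaurentPolynomial k) = 0 := by
  ext m
  simp [coeff_lderiv]

theorem lderiv_add (f g : LaurentPolynomial k) : lderiv (f + g) = lderiv f + lderiv g := by
  ext m
  simp only [coeff_lderiv, coeff_add, Finsupp.add_apply]
  ring

theorem lderiv_single (n : ℤ) (a : k) :
    lderiv (single n a : LaurentPolynomial k) = single (n - 1) ((n : k) * a) := by
  classical
  ext m
  simp only [coeff_lderiv, coeff_single, Finsupp.single_apply]
  by_cases hm : m = n - 1
  · subst hm
    simp
  · rw [if_neg (by omega), if_neg (by omega), mul_zero]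

theorem lderiv_single_mul_single (m n : ℤ) (a b : k) :
    lderiv (single m a * single n b : LaurentPolynomial k) =
      lderiv (single m a) * single n b + single m a * lderiv (single n b) := by
  rw [single_mul_single, lderiv_single, lderiv_single, lderiv_single, single_mul_single,
    single_mul_single, sub_add_eq_add_sub, add_sub_assoc, ← single_add]
  push_cast
  ring_nf

theorem lderiv_mul (f g : LaurentPolynomial k) :
    lderiv (f * g) = lderiv f * g + f * lderiv g := by
  induction f using AddMonoidAlgebra.induction_linear with
  | zero => simp
  | add f₁ f₂ h₁ h₂ =>
    rw [add_mul, lderiv_add, h₁, h₂, lderiv_add]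
    ring
  | single m a =>
    induction g using AddMonoidAlgebra.induction_linear with
    | zero => simp
    | add g₁ g₂ h₁ h₂ =>
      rw [mul_add, lderiv_add, h₁, h₂, lderiv_add]
      ring
    | single n b => exact lderiv_single_mul_single m n a b

theorem lres_add (f g : LaurentPolynomial k) : lres (f + g) = lres f + lres g := rfl

theorem lres_sub (f g : LaurentPolynomial k) : lres (f - g) = lres f - lres g := rfl

theorem lres_lderiv (f : LaurentPolynomial k) : lres (lderiv f) = 0 := by
  rw [lres, coeff_lderiv]
  simp

theorem lres_mul_T (f : LaurentPolynomial k) (n : ℤ) : lres (f * T n) = f.coeff (-1 - n) := by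
  rw [lres, T, coeff_mul_single_apply, mul_one, sub_eq_add_neg]

theorem eq_zero_of_forall_lres_mul_eq_zero {p : LaurentPolynomial k}
    (h : ∀ b, lres (p * b) = 0) : p = 0 := by
  ext m
  simpa [lres_mul_T] using h (T (-1 - m))

theorem lres_mul_form_eq (g a b : LaurentPolynomial k) :
    lres (g ^ 2 * (a * lderiv b - lderiv a * b)) = -2 * lres (lderiv (g * a) * g * b) := by
  have key : lderiv (g * a) * g * b + lderiv (g * a) * g * b =
      lderiv (g ^ 2 * a * b) - g ^ 2 * (a * lderiv b - lderiv a * b) := by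
    rw [show g ^ 2 * a * b = g * a * (g * b) by ring, lderiv_mul (g * a), lderiv_mul g a,
      lderiv_mul g b]
    ring
  have := congrArg lres key
  rw [lres_add, lres_sub, lres_lderiv] at this
  linear_combination this

end CommRing

theorem eq_C_of_lderiv_eq_zero {k : Type*} [CommRing k] [IsDomain k] [CharZero k]
    {f : LaurentPolynomial k} (hf : lderiv f = 0) : f = C (f.coeff 0) := by
  classical
  ext n
  rw [← single_eq_C, coeff_single, Finsupp.single_apply]
  by_cases hn : n = 0
  · subst hn
    rw [if_pos rfl]
  · have h := congrArg (fun p => p.coeff (n - 1)) hf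
    simp only [coeff_lderiv, sub_add_cancel] at h
    rw [if_neg (Ne.symm hn), (mul_eq_zero.mp h).resolve_left (by exact_mod_cast hn)]

/-- If `g ∈ k[t,t⁻¹]` is nonzero and `Res₀(g²(ab' − a'b)) = 0` for all `b ∈ k[t,t⁻¹]`,
then `g·a` is a constant in `k`. -/
theorem lres_gsq_form_eq_zero_imp_const {k : Type*} [Field k] [CharZero k]
    (g a : LaurentPolynomial k) (hg : g ≠ 0)
    (h : ∀ b : LaurentPolynomial k, lres (g ^ 2 * (a * lderiv b - lderiv a * b)) = 0) :
    ∃ c : k, g * a = LaurentPolynomial.C c := by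
  have hpair : ∀ b, lres (lderiv (g * a) * g * b) = 0 := fun b => by
    simpa [lres_mul_form_eq] using h b
  have hd : lderiv (g * a) = 0 :=
    (mul_eq_zero.mp (eq_zero_of_forall_lres_mul_eq_zero hpair)).resolve_right hg
  exact ⟨_, eq_C_of_lderiv_eq_zero hd⟩
end

section
/- Let V be a vector space over a field k, let B: V × V → k be a bilinear form, and let n be a natural number. Then the span of the linear functionals {B(v,·) : v ∈ V} in the dual space V* has dimension at most n if and only if for all u₁,…,u_{n+1}, v₁,…,v_{n+1} ∈ V the determinant of the (n+1)×(n+1) matrix with (i,j) entry B(uᵢ, vⱼ) is zero. -/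
/-! The rank of `B` is at most `n` iff no `n + 1` of the functionals `B u` are linearly
independent. Finitely many functionals `fᵢ` are independent iff `v ↦ (fᵢ v)ᵢ` is onto `kᶥ`, which
yields `vⱼ` with `fᵢ vⱼ = δᵢⱼ`; conversely a dependence among the `fᵢ` is one among the rows of
every matrix `(fᵢ vⱼ)`. -/

theorem LinearMap.exists_linearIndependent_comp_iff {R M N ι : Type*} [Ring R]
    [AddCommGroup M] [Module R M] [AddCommGroup N] [Module R N] (g : M →ₗ[R] N) :
    (∃ w : ι → LinearMap.range g, LinearIndependent R w) ↔
      ∃ u : ι → M, LinearIndependent R (g ∘ u) := by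
  constructor
  · rintro ⟨w, hw⟩
    choose u hu using fun i => (w i).2
    refine ⟨u, ?_⟩
    have : g ∘ u = (LinearMap.range g).subtype ∘ w := funext hu
    rw [this]
    exact hw.map' _ (Submodule.ker_subtype _)
  · rintro ⟨u, hu⟩
    exact ⟨g.rangeRestrict ∘ u, LinearIndependent.of_comp (LinearMap.range g).subtype hu⟩

theorem LinearMap.rank_range_le_iff {R M N : Type*} [Ring R]
    [Nontrivial R] [AddCommGroup M] [Module R M] [AddCommGroup N] [Module R N]
    (g : M →ₗ[R] N) (n : ℕ) :
    Module.rank R (LinearMap.range g) ≤ n ↔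
      ¬ ∃ u : Fin (n + 1) → M, LinearIndependent R (g ∘ u) := by
  rw [← Cardinal.lt_natCast_add_one_iff, ← not_le, ← Nat.cast_add_one, Module.le_rank_iff,
    g.exists_linearIndependent_comp_iff]

section
variable {K V ι : Type*} [Field K] [AddCommGroup V] [Module K V]

theorem LinearIndependent.surjective_pi [Finite ι] {f : ι → V →ₗ[K] K}
    (hf : LinearIndependent K f) : Function.Surjective (LinearMap.pi f) := by
  have hspan := span_flip_eq_top_iff_linearIndependent.mpr
    (hf.map' (LinearMap.ltoFun K V K K) (LinearMap.ker_eq_bot.mpr DFunLike.coe_injective))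
  rw [← LinearMap.range_eq_top, eq_top_iff, ← hspan, Submodule.span_le]
  rintro _ ⟨v, rfl⟩
  exact ⟨v, rfl⟩

variable [Fintype ι] [DecidableEq ι]

theorem LinearIndependent.exists_det_ne_zero {f : ι → V →ₗ[K] K} (hf : LinearIndependent K f) :
    ∃ v : ι → V, (Matrix.of fun i j => f i (v j)).det ≠ 0 := by
  choose v hv using fun j => hf.surjective_pi (Pi.single j 1)
  refine ⟨v, ?_⟩
  have : (Matrix.of fun i j => f i (v j)) = 1 := by
    ext i j
    simpa [Matrix.one_apply, Pi.single_apply, eq_comm] using congrFun (hv j) i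
  simp [this]

theorem linearIndependent_of_det_ne_zero {f : ι → V →ₗ[K] K} {v : ι → V}
    (h : (Matrix.of fun i j => f i (v j)).det ≠ 0) : LinearIndependent K f :=
  (Matrix.linearIndependent_rows_of_det_ne_zero h).of_comp
    (LinearMap.pi fun j => LinearMap.applyₗ (v j))

theorem linearIndependent_iff_exists_det_ne_zero {f : ι → V →ₗ[K] K} :
    LinearIndependent K f ↔ ∃ v : ι → V, (Matrix.of fun i j => f i (v j)).det ≠ 0 :=
  ⟨LinearIndependent.exists_det_ne_zero, fun ⟨_, h⟩ => linearIndependent_of_det_ne_zero h⟩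

end

/-- Let `B` be a bilinear form on a `k`-vector space `V` and `n : ℕ`.  The span of the
functionals `{B(v,·) : v ∈ V}` in `V*` (i.e. the range of `B : V →ₗ V*`) has dimension at most
`n` iff every `(n+1)×(n+1)` matrix `(B(uᵢ,vⱼ))` has zero determinant. -/
theorem rank_bilin_le_iff_det_eq_zero {k V : Type*} [Field k] [AddCommGroup V] [Module k V]
    (B : V →ₗ[k] V →ₗ[k] k) (n : ℕ) :
    Module.rank k (LinearMap.range B) ≤ n ↔
      ∀ u v : Fin (n + 1) → V,
        Matrix.det (Matrix.of fun i j => B (u i) (v j)) = 0 := by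
  simp only [B.rank_range_le_iff, Function.comp_def, linearIndependent_iff_exists_det_ne_zero,
    not_exists, ne_eq, not_not]
end

section
/- Let a ≥ 2 be an integer and let S ⊆ {1, …, a−2} be a set such that for all distinct m, n ∈ S, either m+n−1 ≥ a or m+n−1 ∈ S. Let g₁ < g₂ < … < g_ℓ be the elements of {1, …, a−1} \ S in increasing order. Then: if g₁ = 1, then g_i ≤ 2i−1 for all 1 ≤ i ≤ ℓ; and if g₁ > 1, then g_i ≤ 2i+1 for all 1 ≤ i ≤ ℓ. -/
/-- Auxiliary lemma: the gap-counting argument, stated over an abstract `G` and `k` to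
avoid dependent-rewrite issues with the `rfl` proof in `orderEmbOfFin`. -/
theorem gaps_aux (a : ℕ) (ha : 2 ≤ a) (S G : Finset ℕ)
    (hGdef : G = Finset.Icc 1 (a - 1) \ S)
    (hsemi : ∀ m ∈ S, ∀ n ∈ S, m ≠ n → (a ≤ m + n - 1 ∨ m + n - 1 ∈ S))
    (k : ℕ) (hk : G.card = k) (i : Fin k) :
    (G.orderEmbOfFin hk ⟨0, i.pos⟩ = 1 → G.orderEmbOfFin hk i ≤ 2 * (i : ℕ) + 1) ∧
    (1 < G.orderEmbOfFin hk ⟨0, i.pos⟩ → G.orderEmbOfFin hk i ≤ 2 * (i : ℕ) + 3) := by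
  have hG : ∀ x, x ∈ G ↔ (1 ≤ x ∧ x ≤ a - 1 ∧ x ∉ S) := by
    intro x; simp [hGdef, Finset.mem_sdiff, Finset.mem_Icc, and_assoc]
  set e := G.orderEmbOfFin hk with he
  have hmem : ∀ j : Fin k, e j ∈ G := fun j => G.orderEmbOfFin_mem hk j
  -- upper bound on the number of gaps ≤ e i
  have hA : (G.filter (· ≤ e i)).card ≤ (i : ℕ) + 1 := by
    have hsub : G.filter (· ≤ e i) ⊆ (Finset.Iic i).image e := by
      intro g hg
      rw [Finset.mem_filter] at hg
      obtain ⟨j, hj⟩ : ∃ j : Fin k, e j = g := by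
        have hr := Finset.range_orderEmbOfFin G hk
        have : g ∈ Set.range e := by rw [he, hr]; exact_mod_cast hg.1
        exact this
      refine Finset.mem_image.2 ⟨j, ?_, hj⟩
      rw [Finset.mem_Iic]
      exact e.le_iff_le.1 (by rw [hj]; exact hg.2)
    calc (G.filter (· ≤ e i)).card ≤ ((Finset.Iic i).image e).card :=
          Finset.card_le_card hsub
      _ ≤ (Finset.Iic i).card := Finset.card_image_le
      _ = (i : ℕ) + 1 := Fin.card_Iic i
  set g := e i with hg
  have hgG : g ∈ G := hmem i
  have hg1 : 1 ≤ g ∧ g ≤ a - 1 ∧ g ∉ S := (hG g).1 hgG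
  -- the pairing map m ↦ g + 1 - m on each pair {m, g+1-m} picks out a gap
  set f : ℕ → ℕ := fun m => if m ∈ S then g + 1 - m else m with hf
  have hmaps : ∀ m ∈ Finset.Icc 1 (g / 2), f m ∈ G.filter (· ≤ g) := by
    intro m hm
    rw [Finset.mem_Icc] at hm
    rw [Finset.mem_filter]
    by_cases hmS : m ∈ S
    · have hfm : f m = g + 1 - m := by simp [hf, hmS]
      rw [hfm]
      have hn : g + 1 - m ∉ S := by
        intro hnS
        have hne : m ≠ g + 1 - m := by omega
        rcases hsemi m hmS _ hnS hne with h | h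
        · omega
        · have heq : m + (g + 1 - m) - 1 = g := by omega
          rw [heq] at h; exact hg1.2.2 h
      exact ⟨(hG _).2 ⟨by omega, by omega, hn⟩, show g + 1 - m ≤ g by omega⟩
    · have hfm : f m = m := by simp [hf, hmS]
      rw [hfm]
      exact ⟨(hG _).2 ⟨by omega, by omega, hmS⟩, show m ≤ g by omega⟩
  have hinj : Set.InjOn f (Finset.Icc 1 (g / 2)) := by
    intro m hm m' hm' hmm
    simp only [Finset.coe_Icc, Set.mem_Icc] at hm hm'
    simp only [hf] at hmm
    split_ifs at hmm <;> omega
  have hcard : g / 2 ≤ (G.filter (· ≤ g)).card := by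
    have h := Finset.card_le_card_of_injOn f hmaps hinj
    rw [Nat.card_Icc] at h
    omega
  refine ⟨?_, fun _ => by omega⟩
  intro h0
  have h1G : (1 : ℕ) ∈ G := h0 ▸ hmem ⟨0, i.pos⟩
  have h1S : (1 : ℕ) ∉ S := ((hG 1).1 h1G).2.2
  by_cases hg2 : 2 ≤ g
  · -- when 1 is a gap, g itself is an extra gap not hit by the pairing map
    set T := (Finset.Icc 1 (g / 2)).image f with hT
    have hTsub : T ⊆ G.filter (· ≤ g) := Finset.image_subset_iff.2 hmaps
    have hgT : g ∉ T := by
      rw [hT, Finset.mem_image]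
      rintro ⟨m, hm, hfm⟩
      rw [Finset.mem_Icc] at hm
      simp only [hf] at hfm
      split_ifs at hfm with hmS
      · have h1 : m = 1 := by omega
        exact h1S (h1 ▸ hmS)
      · omega
    have hgfilt : g ∈ G.filter (· ≤ g) := Finset.mem_filter.2 ⟨hgG, le_refl g⟩
    have hins : insert g T ⊆ G.filter (· ≤ g) := Finset.insert_subset hgfilt hTsub
    have hTcard : T.card = g / 2 := by
      rw [hT, Finset.card_image_of_injOn hinj, Nat.card_Icc]; omega
    have hfinal : g / 2 + 1 ≤ (G.filter (· ≤ g)).card := by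
      have h := Finset.card_le_card hins
      rwa [Finset.card_insert_of_notMem hgT, hTcard] at h
    omega
  · omega

/-- Let `a ≥ 2` and let `S ⊆ {1,…,a−2}` be such that for all distinct `m, n ∈ S`, either
`m+n−1 ≥ a` or `m+n−1 ∈ S`.  List the "gaps" `g₁ < g₂ < … < g_ℓ`, the elements of
`{1,…,a−1} \ S` in increasing order.  Then: if `g₁ = 1` then `gᵢ ≤ 2i−1` for all `i`, and
if `g₁ > 1` then `gᵢ ≤ 2i+1` for all `i`.  (Below, `i : Fin ℓ` is 0-indexed, so `gᵢ₊₁` is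
`orderEmbOfFin i` and the bounds read `2(i+1)−1 = 2i+1` and `2(i+1)+1 = 2i+3`.) -/
theorem gaps_bound (a : ℕ) (ha : 2 ≤ a) (S : Finset ℕ)
    (hS : S ⊆ Finset.Icc 1 (a - 2))
    (hsemi : ∀ m ∈ S, ∀ n ∈ S, m ≠ n → (a ≤ m + n - 1 ∨ m + n - 1 ∈ S)) :
    ∀ i : Fin ((Finset.Icc 1 (a - 1) \ S).card),
      (((Finset.Icc 1 (a - 1) \ S).orderEmbOfFin rfl) ⟨0, i.pos⟩ = 1 →
        ((Finset.Icc 1 (a - 1) \ S).orderEmbOfFin rfl) i ≤ 2 * (i : ℕ) + 1) ∧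
      (1 < ((Finset.Icc 1 (a - 1) \ S).orderEmbOfFin rfl) ⟨0, i.pos⟩ →
        ((Finset.Icc 1 (a - 1) \ S).orderEmbOfFin rfl) i ≤ 2 * (i : ℕ) + 3) :=
  fun i => gaps_aux a ha S _ rfl hsemi _ rfl i
end

section
/- Let k be an uncountable algebraically closed field and let K be a field extension of k whose dimension as a k-vector space is countable (more generally, strictly less than the cardinality of k). Then K = k; that is, the inclusion k → K is an isomorphism. -/
universe u

/-- Let `k` be an uncountable algebraically closed field and `K` a field extension of `k`
whose dimension as a `k`-vector space is strictly less than the cardinality of `k`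
(e.g. countable).  Then `K = k`: the inclusion `k → K` is an isomorphism (bijective). -/
theorem field_extension_small_rank_eq {k K : Type u} [Field k] [IsAlgClosed k]
    [Uncountable k] [Field K] [Algebra k K]
    (h : Module.rank k K < Cardinal.mk k) :
    Function.Bijective (algebraMap k K) := by
  have halg : Algebra.IsAlgebraic k K := by
    constructor
    intro x
    by_contra hx
    have := (Transcendental.linearIndependent_sub_inv (F := k) (E := K) hx).cardinal_le_rank
    exact absurd (this.trans_lt h) (lt_irrefl _)
  exact ⟨(algebraMap k K).injective, IsAlgClosed.algebraMap_bijective_of_isIntegral.2⟩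
end

section
/- Let k be a field of characteristic 0, n ∈ ℕ, and β₀, …, β_n ∈ k with β_n ≠ 0. Define the (n+2)×(n+2) matrix M with rows and columns indexed by i, j ∈ {−1, 0, 1, …, n}, with entry M_{ij} = (j−i)·(i+j+1)!·β_{i+j+1} whenever 0 ≤ i+j+1 ≤ n, and M_{ij} = 0 otherwise. Then the rank of M equals n+2 if n is even, and n+1 if n is odd. In particular M is invertible if and only if n is even. -/
/-!
Index the matrix by `Fin (n + 2)`. Its entries vanish once the index sum exceeds `n + 1`, and on
the antidiagonal `i + j = n + 1` they equal `(j - i) · n! · β n`, which is nonzero unless `i = j`.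
For `n` even the antidiagonal avoids `i = j`, so the matrix is antitriangular with nonzero
antidiagonal and hence invertible. For `n` odd the matrix is skew-symmetric of odd size, hence
singular, while deleting its middle row and column leaves an antitriangular matrix of size
`n + 1` with nonzero antidiagonal, so the rank is `n + 1`.
-/

/-- The `(n+2)×(n+2)` Gram matrix of the form `B_χ` for `χ = χ_{0;β₀,…,β_n}` on `W_{≥−1}`,
in the basis `e_{−1},…,e_n`.  Rows/columns are indexed by `Fin (n+2)`, where the index `i`
corresponds to `i−1 ∈ {−1,0,…,n}`; the `(i,j)` entry is `(j−i)·(i+j+1)!·β_{i+j+1}` when the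
shifted index sum `i+j+1` (here `(i:ℕ)+(j:ℕ)−1`) lies in `{0,…,n}`, and `0` otherwise. -/
noncomputable def gramChi {k : Type*} [Field k] (n : ℕ) (β : ℕ → k) :
    Matrix (Fin (n + 2)) (Fin (n + 2)) k :=
  Matrix.of fun i j =>
    if 1 ≤ (i : ℕ) + (j : ℕ) ∧ (i : ℕ) + (j : ℕ) ≤ n + 1 then
      (((j : ℕ) : k) - ((i : ℕ) : k)) * (Nat.factorial ((i : ℕ) + (j : ℕ) - 1) : k) *
        β ((i : ℕ) + (j : ℕ) - 1)
    else 0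

theorem Fin.val_succAbove {m : ℕ} (p : Fin (m + 1)) (x : Fin m) :
    (p.succAbove x : ℕ) = if (x : ℕ) < p then (x : ℕ) else x + 1 := by
  unfold Fin.succAbove
  split_ifs <;> simp_all [Fin.lt_def]

namespace Matrix

theorem isUnit_of_rank_eq_card {K m : Type*} [Field K] [Fintype m] [DecidableEq m]
    {A : Matrix m m K} (h : A.rank = Fintype.card m) : IsUnit A := by
  rw [← mulVec_surjective_iff_isUnit, ← coe_mulVecLin, ← LinearMap.range_eq_top]
  apply Submodule.eq_top_of_finrank_eq
  simpa [rank] using h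

theorem rank_lt_card_of_det_eq_zero {K m : Type*} [Field K] [Fintype m] [DecidableEq m]
    {A : Matrix m m K} (h : A.det = 0) : A.rank < Fintype.card m := by
  refine (rank_le_card_width A).lt_of_ne fun hrank => ?_
  exact not_isUnit_zero (h ▸ (isUnit_iff_isUnit_det A).1 (isUnit_of_rank_eq_card hrank))

theorem det_eq_zero_of_transpose_eq_neg {R m : Type*} [CommRing R] [NoZeroDivisors R] [CharZero R]
    [Fintype m] [DecidableEq m] {A : Matrix m m R} (hA : Aᵀ = -A) (hodd : Odd (Fintype.card m)) :
    A.det = 0 := by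
  have h := congrArg det hA
  rw [det_transpose, det_neg, hodd.neg_one_pow, neg_one_mul] at h
  exact CharZero.eq_neg_self_iff.1 h

/-- Reversing the columns makes such a matrix upper triangular, with the antidiagonal on its
diagonal. -/
theorem det_ne_zero_of_antitriangular {R : Type*} [CommRing R] [IsDomain R] {N : ℕ}
    (M : Matrix (Fin N) (Fin N) R) (hzero : ∀ i j : Fin N, N ≤ (i : ℕ) + j → M i j = 0)
    (hanti : ∀ i j : Fin N, (i : ℕ) + j + 1 = N → M i j ≠ 0) : M.det ≠ 0 := by
  have htri : (M.submatrix id Fin.revPerm).IsUpperTriangular := fun i j hij =>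
    hzero _ _ (by rw [id_eq, Fin.revPerm_apply, Fin.val_rev]; have : (j : ℕ) < i := hij; omega)
  have hdet := det_permute' Fin.revPerm M
  rw [det_of_isUpperTriangular htri] at hdet
  intro h0
  rw [h0, mul_zero] at hdet
  exact Finset.prod_ne_zero_iff.2 (fun i _ => hanti i i.rev (by rw [Fin.val_rev]; omega)) hdet

end Matrix

open Matrix

section gramChi

variable {k : Type*} [Field k] {n : ℕ} {β : ℕ → k}

theorem gramChi_apply_eq_zero_of_le {i j : Fin (n + 2)} (h : n + 2 ≤ (i : ℕ) + j) :
    gramChi n β i j = 0 :=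
  if_neg (by omega)

theorem gramChi_apply_ne_zero [CharZero k] (hβ : β n ≠ 0) {i j : Fin (n + 2)}
    (hsum : (i : ℕ) + j = n + 1) (hne : (i : ℕ) ≠ j) : gramChi n β i j ≠ 0 := by
  rw [gramChi, of_apply, if_pos (by omega), hsum, Nat.add_sub_cancel]
  refine mul_ne_zero (mul_ne_zero ?_ (by exact_mod_cast n.factorial_ne_zero)) hβ
  exact sub_ne_zero.2 (Nat.cast_injective.ne hne.symm)

theorem gramChi_transpose : (gramChi n β)ᵀ = -gramChi n β := by
  ext i j
  simp only [gramChi, transpose_apply, Matrix.neg_apply, of_apply]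
  rw [Nat.add_comm (j : ℕ)]
  split_ifs <;> ring

theorem det_gramChi_ne_zero_of_even [CharZero k] (hβ : β n ≠ 0) (hn : Even n) :
    (gramChi n β).det ≠ 0 := by
  obtain ⟨c, rfl⟩ := hn
  refine det_ne_zero_of_antitriangular _ (fun i j h => gramChi_apply_eq_zero_of_le h) fun i j h => ?_
  exact gramChi_apply_ne_zero hβ (by omega) (by omega)

theorem det_gramChi_eq_zero_of_odd [CharZero k] (hn : Odd n) : (gramChi n β).det = 0 :=
  det_eq_zero_of_transpose_eq_neg gramChi_transpose (by simpa using hn.add_even even_two)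

/-- The middle index is the one point of the antidiagonal where the factor `j - i` vanishes. -/
theorem det_submatrix_gramChi_ne_zero_of_odd [CharZero k] (hβ : β n ≠ 0)
    (hn : Odd n) :
    let p : Fin (n + 2) := ⟨(n + 1) / 2, by omega⟩
    ((gramChi n β).submatrix p.succAbove p.succAbove).det ≠ 0 := by
  obtain ⟨c, rfl⟩ := hn
  refine det_ne_zero_of_antitriangular _ (fun i j h => ?_) fun i j h => ?_
  · refine gramChi_apply_eq_zero_of_le ?_
    simp only [Fin.val_succAbove]
    split_ifs <;> omega
  · refine gramChi_apply_ne_zero hβ ?_ ?_ <;> simp only [Fin.val_succAbove] <;> split_ifs <;> omega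

end gramChi

/-- For `β₀,…,β_n` with `β_n ≠ 0`, the matrix with entries `(j−i)·(i+j+1)!·β_{i+j+1}`
(for `−1 ≤ i,j ≤ n`, zero when `i+j+1 ∉ {0,…,n}`) has rank `n+2` if `n` is even and `n+1`
if `n` is odd; in particular it is invertible iff `n` is even. -/
theorem gramChi_rank {k : Type*} [Field k] [CharZero k] (n : ℕ) (β : ℕ → k)
    (hβ : β n ≠ 0) :
    (gramChi n β).rank = (if Even n then n + 2 else n + 1) ∧
    (IsUnit (gramChi n β).det ↔ Even n) := by
  rcases Nat.even_or_odd n with hn | hn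
  · have hdet := det_gramChi_ne_zero_of_even hβ hn
    rw [if_pos hn, rank_of_det_ne_zero hdet, Fintype.card_fin]
    exact ⟨rfl, iff_of_true hdet.isUnit hn⟩
  · have hdet := det_gramChi_eq_zero_of_odd (β := β) hn
    have hlt := rank_lt_card_of_det_eq_zero hdet
    have hge := (rank_of_det_ne_zero (det_submatrix_gramChi_ne_zero_of_odd hβ hn)).symm.trans_le
      (rank_submatrix_le _ _ _)
    rw [Fintype.card_fin] at hlt hge
    have hn' := Nat.not_even_iff_odd.2 hn
    rw [if_neg hn', hdet]
    exact ⟨by omega, iff_of_false not_isUnit_zero hn'⟩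
end
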